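/- Let g be a permutation of {1,...,n} commuting with σ. Then the extension g₀: P_n^σ → P_n^σ with g₀(0) = 0 and g₀(x) = g(x) for x ≠ 0 is a quandle automorphism, and every automorphism of P_n^σ (for σ ≠ id) arises this way. -/

import Mathlib

/-- The operation of `P_n^σ` on `{0,1,...,n}`: `x*y = x` if `y ≠ 0`, `x*0 = σ x`
(with `σ` a permutation fixing `0`, encoding a permutation of `{1,...,n}`). -/
def pOp {n : ℕ} (σ : Equiv.Perm (Fin (n + 1))) (x y : Fin (n + 1)) : Fin (n + 1) :=
  if y = 0 then σ x else x

section

variable {n : ℕ} (σ : Equiv.Perm (Fin (n + 1))) {f : Equiv.Perm (Fin (n + 1))}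

@[simp]
lemma pOp_zero (x : Fin (n + 1)) : pOp σ x 0 = σ x := if_pos rfl

lemma pOp_of_ne_zero {x y : Fin (n + 1)} (hy : y ≠ 0) : pOp σ x y = x := if_neg hy

variable {σ}

/-- If `f 0 ≠ 0`, then `f (σ x) = f x * f 0 = f x`, forcing `σ = 1`. -/
lemma apply_zero_eq_zero_of_map_pOp (hσ : σ ≠ 1)
    (h : ∀ x y, f (pOp σ x y) = pOp σ (f x) (f y)) : f 0 = 0 := by
  by_contra hf0
  refine hσ (Equiv.ext fun x => f.injective ?_)
  simpa [pOp_of_ne_zero σ hf0] using h x 0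

lemma commute_of_map_pOp (hf0 : f 0 = 0) (h : ∀ x y, f (pOp σ x y) = pOp σ (f x) (f y)) :
    f * σ = σ * f :=
  Equiv.ext fun x => by simpa [hf0] using h x 0

lemma map_pOp_of_commute (hf0 : f 0 = 0) (hcomm : f * σ = σ * f) (x y : Fin (n + 1)) :
    f (pOp σ x y) = pOp σ (f x) (f y) := by
  rcases eq_or_ne y 0 with rfl | hy
  · simpa [hf0] using DFunLike.congr_fun hcomm x
  · have hfy : f y ≠ 0 := hf0 ▸ f.injective.ne hy
    rw [pOp_of_ne_zero σ hy, pOp_of_ne_zero σ hfy]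

end

theorem aut_iff_centralizer_extension_general {n : ℕ} (σ : Equiv.Perm (Fin (n + 1)))
    (hσ : σ ≠ 1) (f : Equiv.Perm (Fin (n + 1))) :
    (∀ x y, f (pOp σ x y) = pOp σ (f x) (f y)) ↔
    (f 0 = 0 ∧ f * σ = σ * f) := by
  constructor
  · intro h
    have hf0 : f 0 = 0 := apply_zero_eq_zero_of_map_pOp hσ h
    exact ⟨hf0, commute_of_map_pOp hf0 h⟩
  · rintro ⟨hf0, hcomm⟩
    exact map_pOp_of_commute hf0 hcomm

/-- For `σ ≠ id`, a permutation `f` of `{0,...,n}` is a quandle automorphism of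
`P_n^σ` iff it fixes `0` and commutes with `σ`: i.e. the extensions `g₀` of elements
`g` of `C_{S_n}(σ)` are automorphisms and every automorphism arises this way. -/
theorem aut_iff_centralizer_extension {n : ℕ} (σ : Equiv.Perm (Fin (n + 1)))
    (hσ0 : σ 0 = 0) (hσ : σ ≠ 1) (f : Equiv.Perm (Fin (n + 1))) :
    (∀ x y, f (pOp σ x y) = pOp σ (f x) (f y)) ↔
    (f 0 = 0 ∧ f * σ = σ * f) :=
  aut_iff_centralizer_extension_general σ hσ f
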